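/- Theorem (Thm. 9 of the paper: ASC statistic approximation). Let p̂ and q be probability densities on ℝ^d, let φ : (0,∞) → ℝ be measurable, set ψ(t) = φ(t)/(1+t), and let ρ̂ and ρ̂_E be positive measurable functions on ℝ^d such that ∫_{ℝ^d} p̂(x)·|ψ(ρ̂(x)) − ψ(ρ̂_E(x))| dx ≤ ε and ∫_{ℝ^d} q(x)·|ψ(ρ̂(x)) − ψ(ρ̂_E(x))| dx ≤ ε. Let Ŷ = (ŷ₁,…,ŷ_m) be drawn from the m-fold product of the measure with density p̂ and Y = (y₁,…,y_m) from the m-fold product of the measure with density q (on a common probability space), and let δ ∈ (0,1). Then with probability at least 1 − δ, |ASC_φ(Ŷ, Y, ρ̂) − ASC_φ(Ŷ, Y, ρ̂_E)| ≤ 2ε/δ. -/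

import Mathlib

/-!
The difference of the two ASC statistics is dominated pointwise by the statistic `Z` built
from `g = |ψ ∘ ρ̂ - ψ ∘ ρ̂_E|` in place of `ψ ∘ ρ`. Every coordinate of `Ŷ` (resp. `Y`) has
density `p̂` (resp. `q`), so each empirical mean in `Z` has expectation `∫ p̂ g ≤ ε`
(resp. `∫ q g ≤ ε`), and `E[Z] ≤ 2ε`. Markov's inequality then gives `P(Z > 2ε/δ) ≤ δ`.
-/

open MeasureTheory

noncomputable section

/-- A probability density on `ℝ^d`: measurable, nonnegative, integrating to 1
w.r.t. Lebesgue measure. -/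
def IsDensity (d : ℕ) (p : (Fin d → ℝ) → ℝ) : Prop :=
  Measurable p ∧ (∀ x, 0 ≤ p x) ∧ (∫ x, p x) = 1

/-- The measure on `ℝ^d` with density `p` w.r.t. Lebesgue measure. -/
def densMeasure {d : ℕ} (p : (Fin d → ℝ) → ℝ) : Measure (Fin d → ℝ) :=
  volume.withDensity (fun x => ENNReal.ofReal (p x))

/-- The `n`-fold product of the measure on `ℝ^d` with density `p`. -/
def prodDens {d : ℕ} (n : ℕ) (p : (Fin d → ℝ) → ℝ) :
    Measure (Fin n → Fin d → ℝ) :=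
  Measure.pi (fun _ : Fin n => densMeasure p)

/-- The ASC statistic
`ASC_φ(Ŷ, Y, ρ) = (1/m) ∑ᵢ ψ(ρ(ŷᵢ)) + (1/m) ∑ᵢ ψ(ρ(yᵢ))` with
`ψ(t) = φ(t)/(1+t)`. -/
def ASC {d m : ℕ} (φ : ℝ → ℝ) (Yhat Y : Fin m → Fin d → ℝ)
    (ρ : (Fin d → ℝ) → ℝ) : ℝ :=
  (1 / (m : ℝ)) * ∑ i, φ (ρ (Yhat i)) / (1 + ρ (Yhat i))
    + (1 / (m : ℝ)) * ∑ i, φ (ρ (Y i)) / (1 + ρ (Y i))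

def empiricalMean {α : Type*} {m : ℕ} (f : α → ℝ) (v : Fin m → α) : ℝ :=
  (1 / (m : ℝ)) * ∑ i, f (v i)

section EmpiricalMean

variable {α : Type*} {m : ℕ}

lemma abs_empiricalMean_sub_le (f g : α → ℝ) (v : Fin m → α) :
    |empiricalMean f v - empiricalMean g v| ≤ empiricalMean (fun x => |f x - g x|) v := by
  rw [empiricalMean, empiricalMean, empiricalMean, ← mul_sub, ← Finset.sum_sub_distrib,
    abs_mul, abs_of_nonneg (by positivity)]
  gcongr
  exact Finset.abs_sum_le_sum_abs _ _

lemma Measurable.empiricalMean {β : Type*} [MeasurableSpace α] [MeasurableSpace β]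
    {f : α → ℝ} (hf : Measurable f) {V : β → Fin m → α} (hV : Measurable V) :
    Measurable fun b => empiricalMean f (V b) :=
  (Finset.measurable_sum _ fun _ _ => hf.comp hV.eval).const_mul _

lemma ofReal_one_div_mul_natCast_le_one (m : ℕ) :
    ENNReal.ofReal (1 / (m : ℝ)) * (m : ENNReal) ≤ 1 := by
  rw [← ENNReal.ofReal_natCast, ← ENNReal.ofReal_mul (by positivity)]
  rcases eq_or_ne m 0 with rfl | hm
  · simp
  · rw [one_div_mul_cancel (by exact_mod_cast hm), ENNReal.ofReal_one]

/-- The bound is an equality unless `m = 0`, where the empirical mean is `0`. -/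
lemma lintegral_ofReal_empiricalMean_le {Ω : Type*} [MeasurableSpace Ω] [MeasurableSpace α]
    {P : Measure Ω} {μ : Measure α} {V : Ω → Fin m → α} (hV : Measurable V)
    (hlaw : ∀ i, P.map (fun ω => V ω i) = μ) {f : α → ℝ} (hf : Measurable f)
    (hf0 : ∀ x, 0 ≤ f x) :
    ∫⁻ ω, ENNReal.ofReal (empiricalMean f (V ω)) ∂P ≤ ∫⁻ x, ENNReal.ofReal (f x) ∂μ := by
  have hsplit : ∀ ω, ENNReal.ofReal (empiricalMean f (V ω))
      = ENNReal.ofReal (1 / (m : ℝ)) * ∑ i, ENNReal.ofReal (f (V ω i)) := fun ω => by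
    rw [empiricalMean, ENNReal.ofReal_mul (by positivity),
      ENNReal.ofReal_sum_of_nonneg fun i _ => hf0 _]
  have hcoord : ∀ i, ∫⁻ ω, ENNReal.ofReal (f (V ω i)) ∂P = ∫⁻ x, ENNReal.ofReal (f x) ∂μ :=
    fun i => by rw [← hlaw i, lintegral_map hf.ennreal_ofReal hV.eval]
  have hmeas : ∀ i, Measurable fun ω => ENNReal.ofReal (f (V ω i)) :=
    fun i => (hf.comp hV.eval).ennreal_ofReal
  simp_rw [hsplit]
  rw [lintegral_const_mul _ (Finset.measurable_sum _ fun i _ => hmeas i),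
    lintegral_finsetSum _ fun i _ => hmeas i, Finset.sum_congr rfl fun i _ => hcoord i,
    Finset.sum_const, Finset.card_univ, Fintype.card_fin, nsmul_eq_mul, ← mul_assoc]
  exact mul_le_of_le_one_left zero_le (ofReal_one_div_mul_natCast_le_one m)

end EmpiricalMean

lemma map_apply_eq_of_map_eq_pi {Ω ι α : Type*} [MeasurableSpace Ω] [Fintype ι]
    [MeasurableSpace α] {P : Measure Ω} {μ : Measure α} [IsProbabilityMeasure μ]
    {V : Ω → ι → α} (hV : Measurable V) (hlaw : P.map V = Measure.pi fun _ => μ) (i : ι) :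
    P.map (fun ω => V ω i) = μ := by
  classical
  change P.map (Function.eval i ∘ V) = μ
  rw [← Measure.map_map (measurable_pi_apply i) hV, hlaw, (measurePreserving_eval _ i).map_eq]

section Density

variable {d : ℕ} {p : (Fin d → ℝ) → ℝ}

lemma IsDensity.integrable (hp : IsDensity d p) : Integrable p :=
  .of_integral_ne_zero (hp.2.2 ▸ one_ne_zero)

lemma isProbabilityMeasure_densMeasure (hp : IsDensity d p) :
    IsProbabilityMeasure (densMeasure p) := by
  constructor
  rw [densMeasure, withDensity_apply _ MeasurableSet.univ, setLIntegral_univ,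
    ← ofReal_integral_eq_lintegral_ofReal hp.integrable (.of_forall hp.2.1), hp.2.2,
    ENNReal.ofReal_one]

lemma lintegral_ofReal_densMeasure (hp : Measurable p) (hp0 : ∀ x, 0 ≤ p x)
    {g : (Fin d → ℝ) → ℝ} (hg : Measurable g) (hg0 : ∀ x, 0 ≤ g x)
    (hpg : Integrable fun x => p x * g x) :
    ∫⁻ x, ENNReal.ofReal (g x) ∂densMeasure p = ENNReal.ofReal (∫ x, p x * g x) := by
  rw [densMeasure, lintegral_withDensity_eq_lintegral_mul _ hp.ennreal_ofReal
    hg.ennreal_ofReal, ofReal_integral_eq_lintegral_ofReal hpg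
    (.of_forall fun x => mul_nonneg (hp0 x) (hg0 x))]
  simp_rw [Pi.mul_apply, ENNReal.ofReal_mul (hp0 _)]

lemma lintegral_ofReal_empiricalMean_le_of_map_eq_prodDens {Ω : Type*} [MeasurableSpace Ω]
    {P : Measure Ω} {m : ℕ} (hp : IsDensity d p) {V : Ω → Fin m → Fin d → ℝ}
    (hV : Measurable V) (hlaw : P.map V = prodDens m p) {g : (Fin d → ℝ) → ℝ}
    (hg : Measurable g) (hg0 : ∀ x, 0 ≤ g x) (hpg : Integrable fun x => p x * g x)
    {ε : ℝ} (hε : ∫ x, p x * g x ≤ ε) :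
    ∫⁻ ω, ENNReal.ofReal (empiricalMean g (V ω)) ∂P ≤ ENNReal.ofReal ε := by
  have := isProbabilityMeasure_densMeasure hp
  calc ∫⁻ ω, ENNReal.ofReal (empiricalMean g (V ω)) ∂P
      ≤ ∫⁻ x, ENNReal.ofReal (g x) ∂densMeasure p :=
        lintegral_ofReal_empiricalMean_le hV (map_apply_eq_of_map_eq_pi hV hlaw) hg hg0
    _ = ENNReal.ofReal (∫ x, p x * g x) := lintegral_ofReal_densMeasure hp.1 hp.2.1 hg hg0 hpg
    _ ≤ ENNReal.ofReal ε := ENNReal.ofReal_le_ofReal hε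

end Density

section Markov

variable {Ω : Type*} [MeasurableSpace Ω] {P : Measure Ω} {Z : Ω → ℝ} {c δ : ℝ}

lemma measure_div_lt_le_of_lintegral_ofReal_le (hZ : Measurable Z) (hc : 0 ≤ c) (hδ : 0 < δ)
    (hZc : ∫⁻ ω, ENNReal.ofReal (Z ω) ∂P ≤ ENNReal.ofReal c) :
    P {ω | c / δ < Z ω} ≤ ENNReal.ofReal δ := by
  rcases hc.eq_or_lt with rfl | hc
  -- Markov's bound is vacuous at threshold `0`; instead `Z ≤ 0` almost surely.
  · have hzero : (fun ω => ENNReal.ofReal (Z ω)) =ᵐ[P] 0 :=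
      (lintegral_eq_zero_iff hZ.ennreal_ofReal).1 (by simpa using hZc)
    refine (measure_mono_null (fun ω hω => ?_) (ae_iff.1 hzero)).trans_le zero_le
    simpa [zero_div, ENNReal.ofReal_eq_zero] using hω
  · have hcδ : 0 < c / δ := div_pos hc hδ
    calc P {ω | c / δ < Z ω}
        ≤ P {ω | ENNReal.ofReal (c / δ) ≤ ENNReal.ofReal (Z ω)} :=
          measure_mono fun ω hω => ENNReal.ofReal_le_ofReal (le_of_lt hω)
      _ ≤ (∫⁻ ω, ENNReal.ofReal (Z ω) ∂P) / ENNReal.ofReal (c / δ) :=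
          meas_ge_le_lintegral_div hZ.ennreal_ofReal.aemeasurable
            (ENNReal.ofReal_pos.2 hcδ).ne' ENNReal.ofReal_ne_top
      _ ≤ ENNReal.ofReal c / ENNReal.ofReal (c / δ) := by gcongr
      _ = ENNReal.ofReal δ := by
          rw [← ENNReal.ofReal_div_of_pos hcδ, div_div_cancel₀ hc.ne']

lemma ofReal_one_sub_le_measure_le_div [IsProbabilityMeasure P] (hZ : Measurable Z)
    (hc : 0 ≤ c) (hδ : 0 < δ) (hZc : ∫⁻ ω, ENNReal.ofReal (Z ω) ∂P ≤ ENNReal.ofReal c) :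
    ENNReal.ofReal (1 - δ) ≤ P {ω | Z ω ≤ c / δ} := by
  have hcompl : {ω | Z ω ≤ c / δ} = {ω | c / δ < Z ω}ᶜ := by ext; simp
  rw [hcompl, prob_compl_eq_one_sub (measurableSet_lt measurable_const hZ),
    ENNReal.ofReal_sub _ hδ.le, ENNReal.ofReal_one]
  exact tsub_le_tsub_left (measure_div_lt_le_of_lintegral_ofReal_le hZ hc hδ hZc) 1

end Markov

lemma abs_ASC_sub_le {d m : ℕ} (φ : ℝ → ℝ) (Yhat Y : Fin m → Fin d → ℝ)
    (ρ ρ' : (Fin d → ℝ) → ℝ) :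
    |ASC φ Yhat Y ρ - ASC φ Yhat Y ρ'| ≤
      empiricalMean (fun x => |φ (ρ x) / (1 + ρ x) - φ (ρ' x) / (1 + ρ' x)|) Yhat +
      empiricalMean (fun x => |φ (ρ x) / (1 + ρ x) - φ (ρ' x) / (1 + ρ' x)|) Y := by
  set ψ : ((Fin d → ℝ) → ℝ) → (Fin d → ℝ) → ℝ := fun ρ x => φ (ρ x) / (1 + ρ x)
  have hASC : ∀ ρ, ASC φ Yhat Y ρ = empiricalMean (ψ ρ) Yhat + empiricalMean (ψ ρ) Y :=
    fun _ => rfl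
  rw [hASC, hASC, add_sub_add_comm]
  exact (abs_add_le _ _).trans
    (add_le_add (abs_empiricalMean_sub_le _ _ _) (abs_empiricalMean_sub_le _ _ _))

theorem ASC_approx_general
    {d : ℕ} (phat q : (Fin d → ℝ) → ℝ)
    (hphat : IsDensity d phat) (hq : IsDensity d q)
    (φ : ℝ → ℝ) (hφ : Measurable φ)
    (ρhat ρE : (Fin d → ℝ) → ℝ)
    (hρhat_meas : Measurable ρhat)
    (hρE_meas : Measurable ρE)
    (ε : ℝ)
    (hint₁ : Integrable (fun x => phat x *
      |φ (ρhat x) / (1 + ρhat x) - φ (ρE x) / (1 + ρE x)|))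
    (h₁ : ∫ x, phat x * |φ (ρhat x) / (1 + ρhat x) - φ (ρE x) / (1 + ρE x)| ≤ ε)
    (hint₂ : Integrable (fun x => q x *
      |φ (ρhat x) / (1 + ρhat x) - φ (ρE x) / (1 + ρE x)|))
    (h₂ : ∫ x, q x * |φ (ρhat x) / (1 + ρhat x) - φ (ρE x) / (1 + ρE x)| ≤ ε)
    (m : ℕ)
    {Ω : Type*} [MeasurableSpace Ω] (P : Measure Ω) [IsProbabilityMeasure P]
    (Yhat Y : Ω → Fin m → Fin d → ℝ)
    (hYhat : Measurable Yhat) (hY : Measurable Y)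
    (hYhatlaw : Measure.map Yhat P = prodDens m phat)
    (hYlaw : Measure.map Y P = prodDens m q)
    (δ : ℝ) (hδ0 : 0 < δ) :
    ENNReal.ofReal (1 - δ) ≤
      P {ω | |ASC φ (Yhat ω) (Y ω) ρhat - ASC φ (Yhat ω) (Y ω) ρE|
              ≤ 2 * ε / δ} := by
  set g : (Fin d → ℝ) → ℝ := fun x => |φ (ρhat x) / (1 + ρhat x) - φ (ρE x) / (1 + ρE x)|
  have hg : Measurable g := by fun_prop
  have hg0 : ∀ x, 0 ≤ g x := fun x => abs_nonneg _
  have hε : 0 ≤ ε := (integral_nonneg fun x => mul_nonneg (hphat.2.1 x) (hg0 x)).trans h₁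
  set Z : Ω → ℝ := fun ω => empiricalMean g (Yhat ω) + empiricalMean g (Y ω)
  have hZ : Measurable Z :=
    (hg.empiricalMean hYhat).add (hg.empiricalMean hY)
  have hEZ : ∫⁻ ω, ENNReal.ofReal (Z ω) ∂P ≤ ENNReal.ofReal (2 * ε) := by
    rw [two_mul, ENNReal.ofReal_add hε hε]
    calc ∫⁻ ω, ENNReal.ofReal (Z ω) ∂P
        ≤ ∫⁻ ω, ENNReal.ofReal (empiricalMean g (Yhat ω)) +
            ENNReal.ofReal (empiricalMean g (Y ω)) ∂P :=
          lintegral_mono fun ω => ENNReal.ofReal_add_le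
      _ ≤ ENNReal.ofReal ε + ENNReal.ofReal ε := by
          rw [lintegral_add_left (hg.empiricalMean hYhat).ennreal_ofReal]
          exact add_le_add
            (lintegral_ofReal_empiricalMean_le_of_map_eq_prodDens hphat hYhat hYhatlaw hg hg0
              hint₁ h₁)
            (lintegral_ofReal_empiricalMean_le_of_map_eq_prodDens hq hY hYlaw hg hg0 hint₂ h₂)
  exact (ofReal_one_sub_le_measure_le_div hZ (by positivity) hδ0 hEZ).trans
    (measure_mono fun ω hω => (abs_ASC_sub_le φ (Yhat ω) (Y ω) ρhat ρE).trans hω)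

/-- **Theorem 9: ASC statistic approximation.** -/
theorem ASC_approx
    {d : ℕ} (phat q : (Fin d → ℝ) → ℝ)
    (hphat : IsDensity d phat) (hq : IsDensity d q)
    (φ : ℝ → ℝ) (hφ : Measurable φ)
    (ρhat ρE : (Fin d → ℝ) → ℝ)
    (hρhat_meas : Measurable ρhat) (hρhat_pos : ∀ x, 0 < ρhat x)
    (hρE_meas : Measurable ρE) (hρE_pos : ∀ x, 0 < ρE x)
    (ε : ℝ)
    (hint₁ : Integrable (fun x => phat x *
      |φ (ρhat x) / (1 + ρhat x) - φ (ρE x) / (1 + ρE x)|))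
    (h₁ : ∫ x, phat x * |φ (ρhat x) / (1 + ρhat x) - φ (ρE x) / (1 + ρE x)| ≤ ε)
    (hint₂ : Integrable (fun x => q x *
      |φ (ρhat x) / (1 + ρhat x) - φ (ρE x) / (1 + ρE x)|))
    (h₂ : ∫ x, q x * |φ (ρhat x) / (1 + ρhat x) - φ (ρE x) / (1 + ρE x)| ≤ ε)
    (m : ℕ) (hm : 1 ≤ m)
    {Ω : Type*} [MeasurableSpace Ω] (P : Measure Ω) [IsProbabilityMeasure P]
    (Yhat Y : Ω → Fin m → Fin d → ℝ)
    (hYhat : Measurable Yhat) (hY : Measurable Y)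
    (hYhatlaw : Measure.map Yhat P = prodDens m phat)
    (hYlaw : Measure.map Y P = prodDens m q)
    (δ : ℝ) (hδ0 : 0 < δ) (hδ1 : δ < 1) :
    ENNReal.ofReal (1 - δ) ≤
      P {ω | |ASC φ (Yhat ω) (Y ω) ρhat - ASC φ (Yhat ω) (Y ω) ρE|
              ≤ 2 * ε / δ} :=
  ASC_approx_general phat q hphat hq φ hφ ρhat ρE hρhat_meas hρE_meas ε hint₁ h₁ hint₂ h₂ m P Yhat Y
    hYhat hY hYhatlaw hYlaw δ hδ0
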